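/- arXiv:2202.07739 — 5 statements merged into one kernel-verified Lean document; each statement's English description precedes it below -/
import Mathlib

section
/- The set U₀ lies in the c₀-sublevel set of V₀: let γ > 0, ε₀ > 0 and c₀ > 0 be given, set c̃₀ := ε₀·α and d₀ := c₀ - γ·c̃₀²/α, and assume d₀ > 0. Then every (z₁, z₂) ∈ ℝ^n × ℝ^n with ‖∇L(z₁)‖ ≤ c̃₀ and ½‖z₂‖² ≤ d₀ satisfies V₀(z₁, z₂) ≤ c₀. -/
/-! Convexity gives `L z₁ - L* ≤ ⟪∇L z₁, z₁ - z₁*⟫ ≤ ‖∇L z₁‖ ‖z₁ - z₁*‖`, and quadratic growth bounds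
`‖z₁ - z₁*‖²` by `(L z₁ - L*) / α`; together `L z₁ - L* ≤ ‖∇L z₁‖² / α ≤ c̃₀² / α`, so
`V₀ ≤ γ c̃₀² / α + d₀ = c₀`. -/

section FirstOrderCondition

variable {E : Type*} [NormedAddCommGroup E] [NormedSpace ℝ E] {s : Set E} {f : E → ℝ}
  {f' : E →L[ℝ] ℝ} {x y : E}

theorem ConvexOn.fderiv_apply_sub_le (hf : ConvexOn ℝ s f) (hx : x ∈ s) (hy : y ∈ s)
    (hfx : HasFDerivAt f f' x) : f' (y - x) ≤ f y - f x := by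
  set ℓ : ℝ →ᵃ[ℝ] E := AffineMap.lineMap x y
  have hℓ0 : ℓ 0 = x := AffineMap.lineMap_apply_zero x y
  have hℓ1 : ℓ 1 = y := AffineMap.lineMap_apply_one x y
  have hg : ConvexOn ℝ (ℓ ⁻¹' s) (f ∘ ℓ) := hf.comp_affineMap ℓ
  have hg' : HasDerivAt (f ∘ ℓ) (f' (y - x)) 0 := by
    rw [← hℓ0] at hfx
    exact hfx.comp_hasDerivAt 0 AffineMap.hasDerivAt_lineMap
  have hslope := hg.le_slope_of_hasDerivAt (x := (0 : ℝ)) (y := 1)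
    (by rwa [Set.mem_preimage, hℓ0]) (by rwa [Set.mem_preimage, hℓ1]) one_pos hg'
  rwa [slope_def_field, Function.comp_apply, Function.comp_apply, hℓ0, hℓ1, sub_zero,
    div_one] at hslope

theorem ConvexOn.sub_le_opNorm_fderiv_sq_div (hf : ConvexOn ℝ s f) (hx : x ∈ s) (hy : y ∈ s)
    (hfx : HasFDerivAt f f' x) {α : ℝ} (hα : 0 < α) (hgrowth : α * ‖x - y‖ ^ 2 ≤ f x - f y) :
    f x - f y ≤ ‖f'‖ ^ 2 / α := by
  have hupper : f x - f y ≤ ‖f'‖ * ‖x - y‖ :=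
    calc f x - f y ≤ f' (x - y) := by
          have h := hf.fderiv_apply_sub_le hx hy hfx
          rw [← neg_sub x y, map_neg] at h
          linarith
      _ ≤ ‖f'‖ * ‖x - y‖ := (Real.le_norm_self _).trans (f'.le_opNorm _)
  rw [le_div_iff₀ hα]
  nlinarith [sq_nonneg (α * ‖x - y‖ - ‖f'‖), norm_nonneg (x - y), norm_nonneg f']

end FirstOrderCondition

theorem ConvexOn.sub_le_norm_gradient_sq_div {F : Type*} [NormedAddCommGroup F]
    [InnerProductSpace ℝ F] [CompleteSpace F] {s : Set F} {f : F → ℝ} {x y : F}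
    (hf : ConvexOn ℝ s f) (hx : x ∈ s) (hy : y ∈ s) (hfx : DifferentiableAt ℝ f x)
    {α : ℝ} (hα : 0 < α) (hgrowth : α * ‖x - y‖ ^ 2 ≤ f x - f y) :
    f x - f y ≤ ‖gradient f x‖ ^ 2 / α := by
  have h := hf.sub_le_opNorm_fderiv_sq_div hx hy
    (hasGradientAt_iff_hasFDerivAt.mp hfx.hasGradientAt) hα hgrowth
  rwa [LinearIsometryEquiv.norm_map] at h

theorem U0_in_sublevel_V0_general {n : ℕ}
    (L : EuclideanSpace ℝ (Fin n) → ℝ)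
    (hC1 : ContDiff ℝ 1 L)
    (hconv : ConvexOn ℝ Set.univ L)
    (zs : EuclideanSpace ℝ (Fin n))
    (α : ℝ) (hα : 0 < α)
    (hQG : ∀ z, α * ‖z - zs‖ ^ 2 ≤ L z - L zs)
    (γ ε₀ c₀ : ℝ) (hγ : 0 < γ) :
    ∀ z₁ z₂ : EuclideanSpace ℝ (Fin n),
      ‖gradient L z₁‖ ≤ ε₀ * α →
      (1 / 2) * ‖z₂‖ ^ 2 ≤ c₀ - γ * ((ε₀ * α) ^ 2 / α) →
      γ * (L z₁ - L zs) + (1 / 2) * ‖z₂‖ ^ 2 ≤ c₀ := by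
  intro z₁ z₂ hgrad hz₂
  have hsubopt : L z₁ - L zs ≤ (ε₀ * α) ^ 2 / α :=
    calc L z₁ - L zs ≤ ‖gradient L z₁‖ ^ 2 / α :=
          hconv.sub_le_norm_gradient_sq_div (Set.mem_univ _) (Set.mem_univ _)
            (hC1.differentiable one_ne_zero z₁) hα (hQG z₁)
      _ ≤ (ε₀ * α) ^ 2 / α := by gcongr
  linarith [mul_le_mul_of_nonneg_left hsubopt hγ.le]

/-- The set `U₀` lies in the `c₀`-sublevel set of `V₀`:
with `c̃₀ = ε₀ α` and `d₀ = c₀ - γ c̃₀²/α > 0`, every `(z₁, z₂)` with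
`‖∇L(z₁)‖ ≤ c̃₀` and `½‖z₂‖² ≤ d₀` satisfies `V₀(z₁,z₂) ≤ c₀`. -/
theorem U0_in_sublevel_V0 {n : ℕ} (hn : 1 ≤ n)
    (L : EuclideanSpace ℝ (Fin n) → ℝ)
    (hC1 : ContDiff ℝ 1 L)
    (hconv : ConvexOn ℝ Set.univ L)
    (zs : EuclideanSpace ℝ (Fin n))
    (hmin : ∀ z, L zs ≤ L z)
    (huniq : ∀ z, (∀ y, L z ≤ L y) → z = zs)
    (α : ℝ) (hα : 0 < α)
    (hQG : ∀ z, α * ‖z - zs‖ ^ 2 ≤ L z - L zs)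
    (γ ε₀ c₀ : ℝ) (hγ : 0 < γ) (hε₀ : 0 < ε₀) (hc₀ : 0 < c₀)
    (hd₀ : 0 < c₀ - γ * ((ε₀ * α) ^ 2 / α)) :
    ∀ z₁ z₂ : EuclideanSpace ℝ (Fin n),
      ‖gradient L z₁‖ ≤ ε₀ * α →
      (1 / 2) * ‖z₂‖ ^ 2 ≤ c₀ - γ * ((ε₀ * α) ^ 2 / α) →
      γ * (L z₁ - L zs) + (1 / 2) * ‖z₂‖ ^ 2 ≤ c₀ :=
  U0_in_sublevel_V0_general L hC1 hconv zs α hα hQG γ ε₀ c₀ hγ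
end

section
/- The set T₁₀ lies in the c₁₀-sublevel set of V₁: let ζ > 0, M > 0, ε₁₀ > 0 and c₁₀ > 0 be given, set c̃₁₀ := ε₁₀·α and d₁₀ := c₁₀ - (c̃₁₀/α)² - (ζ²/M)(c̃₁₀²/α), and assume d₁₀ > 0. Then every (z₁, z₂) ∈ ℝ^n × ℝ^n with ‖∇L(z₁)‖ ≤ c̃₁₀ and ‖z₂‖² ≤ d₁₀ satisfies V₁((z₁, z₂), τ) ≤ c₁₀ for every τ ≥ 0. -/
/-!
Convexity gives `L z₁ - L* ≤ ⟪∇L z₁, z₁ - z₁*⟫ ≤ ‖∇L z₁‖ ‖z₁ - z₁*‖`; combined with quadratic growth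
this yields `α ‖z₁ - z₁*‖ ≤ ‖∇L z₁‖` and `α (L z₁ - L*) ≤ ‖∇L z₁‖²`, so on `T₁₀` both
`‖z₁ - z₁*‖ ≤ ε₁₀` and `L z₁ - L* ≤ ε₁₀² α`. Since `0 < ā(τ) ≤ 1`, the kinetic part of `V₁` is at
most `‖z₁ - z₁*‖² + ‖z₂‖² ≤ ε₁₀² + ‖z₂‖²`, and `d₁₀` is exactly the room left in `c₁₀`.
-/

open scoped RealInnerProductSpace

section Gradient

variable {E : Type*} [NormedAddCommGroup E] [InnerProductSpace ℝ E] [CompleteSpace E]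
  {f : E → ℝ} {s : Set E} {x y : E}

theorem ConvexOn.inner_gradient_sub_le (hf : ConvexOn ℝ s f) (hx : x ∈ s) (hy : y ∈ s)
    (hfx : DifferentiableAt ℝ f x) : ⟪gradient f x, y - x⟫ ≤ f y - f x := by
  set l : ℝ →ᵃ[ℝ] E := AffineMap.lineMap x y
  have hderiv : HasDerivAt (f ∘ l) ⟪gradient f x, y - x⟫ 0 := by
    simpa only [InnerProductSpace.toDual_apply_apply] using
      hfx.hasGradientAt.hasFDerivAt.comp_hasDerivAt_of_eq (0 : ℝ) AffineMap.hasDerivAt_lineMap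
        (AffineMap.lineMap_apply_zero x y).symm
  simpa [slope, l] using (hf.comp_affineMap l).le_slope_of_hasDerivAt
    (by simpa [l] using hx) (by simpa [l] using hy) zero_lt_one hderiv

theorem ConvexOn.sub_le_norm_gradient_mul_norm_sub (hf : ConvexOn ℝ s f) (hx : x ∈ s)
    (hy : y ∈ s) (hfx : DifferentiableAt ℝ f x) :
    f x - f y ≤ ‖gradient f x‖ * ‖x - y‖ := by
  have hsub := hf.inner_gradient_sub_le hx hy hfx
  rw [← neg_sub x y, inner_neg_right] at hsub
  linarith [real_inner_le_norm (gradient f x) (x - y)]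

theorem ConvexOn.mul_norm_sub_le_norm_gradient_of_growth {α : ℝ} (hf : ConvexOn ℝ s f)
    (hx : x ∈ s) (hy : y ∈ s) (hfx : DifferentiableAt ℝ f x)
    (hgrowth : α * ‖x - y‖ ^ 2 ≤ f x - f y) : α * ‖x - y‖ ≤ ‖gradient f x‖ := by
  have hgap := hf.sub_le_norm_gradient_mul_norm_sub hx hy hfx
  rcases (norm_nonneg (x - y)).eq_or_lt with hr | hr
  · rw [← hr, mul_zero]
    exact norm_nonneg _
  · exact le_of_mul_le_mul_right (by linarith [sq (‖x - y‖)]) hr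

theorem ConvexOn.mul_sub_le_norm_gradient_sq_of_growth {α : ℝ} (hα : 0 ≤ α)
    (hf : ConvexOn ℝ s f) (hx : x ∈ s) (hy : y ∈ s) (hfx : DifferentiableAt ℝ f x)
    (hgrowth : α * ‖x - y‖ ^ 2 ≤ f x - f y) : α * (f x - f y) ≤ ‖gradient f x‖ ^ 2 := by
  have hgap := hf.sub_le_norm_gradient_mul_norm_sub hx hy hfx
  have hdist := hf.mul_norm_sub_le_norm_gradient_of_growth hx hy hfx hgrowth
  calc α * (f x - f y) ≤ α * (‖gradient f x‖ * ‖x - y‖) := mul_le_mul_of_nonneg_left hgap hα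
    _ = ‖gradient f x‖ * (α * ‖x - y‖) := by ring
    _ ≤ ‖gradient f x‖ ^ 2 := by rw [sq]; exact mul_le_mul_of_nonneg_left hdist (norm_nonneg _)

end Gradient

theorem norm_smul_add_sq_le {E : Type*} [SeminormedAddCommGroup E] [NormedSpace ℝ E]
    {a : ℝ} (ha : |a| ≤ 1) (u v : E) :
    ‖a • u + v‖ ^ 2 ≤ 2 * (‖u‖ ^ 2 + ‖v‖ ^ 2) := by
  have hle : ‖a • u + v‖ ≤ ‖u‖ + ‖v‖ := by
    refine (norm_add_le _ _).trans ?_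
    gcongr
    rw [norm_smul, Real.norm_eq_abs]
    exact mul_le_of_le_one_left (norm_nonneg _) ha
  exact (pow_le_pow_left₀ (norm_nonneg _) hle 2).trans add_sq_le

theorem T10_in_sublevel_V1_general {n : ℕ}
    (L : EuclideanSpace ℝ (Fin n) → ℝ)
    (hC1 : ContDiff ℝ 1 L)
    (hconv : ConvexOn ℝ Set.univ L)
    (zs : EuclideanSpace ℝ (Fin n))
    (α : ℝ) (hα : 0 < α)
    (hQG : ∀ z, α * ‖z - zs‖ ^ 2 ≤ L z - L zs)
    (ζ M ε₁₀ c₁₀ : ℝ) (hM : 0 < M) :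
    ∀ z₁ z₂ : EuclideanSpace ℝ (Fin n),
      ‖gradient L z₁‖ ≤ ε₁₀ * α →
      ‖z₂‖ ^ 2 ≤ c₁₀ - ((ε₁₀ * α) / α) ^ 2 - (ζ ^ 2 / M) * ((ε₁₀ * α) ^ 2 / α) →
      ∀ τ : ℝ, 0 ≤ τ →
        (1 / 2) * ‖(2 / (τ + 2)) • (z₁ - zs) + z₂‖ ^ 2
          + (ζ ^ 2 / M) * (L z₁ - L zs) ≤ c₁₀ := by
  intro z₁ z₂ hgrad hz₂ τ hτ
  have hdiff : DifferentiableAt ℝ L z₁ := (hC1.differentiable one_ne_zero).differentiableAt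
  have hdist : ‖z₁ - zs‖ ≤ ε₁₀ := le_of_mul_le_mul_left (by
    linarith [hconv.mul_norm_sub_le_norm_gradient_of_growth trivial trivial hdiff (hQG z₁)]) hα
  have hgap : L z₁ - L zs ≤ ε₁₀ ^ 2 * α := le_of_mul_le_mul_left (by
    linarith [hconv.mul_sub_le_norm_gradient_sq_of_growth hα.le trivial trivial hdiff (hQG z₁),
      pow_le_pow_left₀ (norm_nonneg _) hgrad 2]) hα
  have hkinetic := norm_smul_add_sq_le (a := 2 / (τ + 2))
    (by rw [abs_of_nonneg (by positivity), div_le_one (by positivity)]; linarith) (z₁ - zs) z₂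
  have hpot := mul_le_mul_of_nonneg_left hgap (by positivity : 0 ≤ ζ ^ 2 / M)
  have hd₁₀ : c₁₀ - ((ε₁₀ * α) / α) ^ 2 - (ζ ^ 2 / M) * ((ε₁₀ * α) ^ 2 / α)
      = c₁₀ - ε₁₀ ^ 2 - (ζ ^ 2 / M) * (ε₁₀ ^ 2 * α) := by
    field_simp
  rw [hd₁₀] at hz₂
  linarith [pow_le_pow_left₀ (norm_nonneg _) hdist 2]

/-- The set `T₁₀` lies in the `c₁₀`-sublevel set of `V₁`:
with `c̃₁₀ = ε₁₀ α` and `d₁₀ = c₁₀ - (c̃₁₀/α)² - (ζ²/M)(c̃₁₀²/α) > 0`, every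
`(z₁, z₂)` with `‖∇L(z₁)‖ ≤ c̃₁₀` and `‖z₂‖² ≤ d₁₀` satisfies
`V₁((z₁,z₂),τ) ≤ c₁₀` for all `τ ≥ 0`. -/
theorem T10_in_sublevel_V1 {n : ℕ} (hn : 1 ≤ n)
    (L : EuclideanSpace ℝ (Fin n) → ℝ)
    (hC1 : ContDiff ℝ 1 L)
    (hconv : ConvexOn ℝ Set.univ L)
    (zs : EuclideanSpace ℝ (Fin n))
    (hmin : ∀ z, L zs ≤ L z)
    (huniq : ∀ z, (∀ y, L z ≤ L y) → z = zs)
    (α : ℝ) (hα : 0 < α)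
    (hQG : ∀ z, α * ‖z - zs‖ ^ 2 ≤ L z - L zs)
    (ζ M ε₁₀ c₁₀ : ℝ) (hζ : 0 < ζ) (hM : 0 < M) (hε₁₀ : 0 < ε₁₀) (hc₁₀ : 0 < c₁₀)
    (hd₁₀ : 0 < c₁₀ - ((ε₁₀ * α) / α) ^ 2 - (ζ ^ 2 / M) * ((ε₁₀ * α) ^ 2 / α)) :
    ∀ z₁ z₂ : EuclideanSpace ℝ (Fin n),
      ‖gradient L z₁‖ ≤ ε₁₀ * α →
      ‖z₂‖ ^ 2 ≤ c₁₀ - ((ε₁₀ * α) / α) ^ 2 - (ζ ^ 2 / M) * ((ε₁₀ * α) ^ 2 / α) →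
      ∀ τ : ℝ, 0 ≤ τ →
        (1 / 2) * ‖(2 / (τ + 2)) • (z₁ - zs) + z₂‖ ^ 2
          + (ζ ^ 2 / M) * (L z₁ - L zs) ≤ c₁₀ :=
  T10_in_sublevel_V1_general L hC1 hconv zs α hα hQG ζ M ε₁₀ c₁₀ hM
end

section
/- Boundedness of heavy ball solutions: along every solution of the heavy ball system, the function t ↦ V₀(z₁(t), z₂(t)) is nonincreasing on [0, ∞); consequently ‖z₁(t) - z₁*‖² + ‖z₂(t)‖² ≤ V₀(z₁(0), z₂(0)) / min{αγ, ½} for all t ≥ 0. -/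
open scoped RealInnerProductSpace

noncomputable section

/-!
Along the heavy ball flow the energy `V₀ = γ (L - L*) + ½ ‖ż‖²` has derivative `-λ ‖ż‖² ≤ 0`:
the gradient terms `γ ⟪∇L, ż⟫` from the potential and `-γ ⟪ż, ∇L⟫` from the kinetic part cancel.
Hence `V₀` is nonincreasing, and by quadratic growth `V₀ ≥ min (αγ) ½ · (‖z₁ - z₁*‖² + ‖z₂‖²)`.
-/

variable {E : Type*} [NormedAddCommGroup E]

def heavyBallEnergy (L : E → ℝ) (γ Lstar : ℝ) (x v : E) : ℝ :=
  γ * (L x - Lstar) + (1 / 2) * ‖v‖ ^ 2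

theorem antitoneOn_Ici_of_hasDerivAt_nonpos {f f' : ℝ → ℝ} {a : ℝ}
    (hf : ∀ t, a ≤ t → HasDerivAt f (f' t) t) (hf' : ∀ t, a ≤ t → f' t ≤ 0) :
    AntitoneOn f (Set.Ici a) := by
  refine antitoneOn_of_hasDerivWithinAt_nonpos (f' := f') (convex_Ici a)
    (fun t ht => (hf t ht).continuousAt.continuousWithinAt) (fun t ht => ?_) (fun t ht => ?_)
  all_goals rw [interior_Ici] at ht
  exacts [(hf t ht.le).hasDerivWithinAt, hf' t ht.le]

theorem sq_norm_add_sq_norm_le_heavyBallEnergy_div {L : E → ℝ} {xs : E} {α γ : ℝ}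
    (hα : 0 < α) (hγ : 0 < γ) (hQG : ∀ z, α * ‖z - xs‖ ^ 2 ≤ L z - L xs) (x v : E) :
    ‖x - xs‖ ^ 2 + ‖v‖ ^ 2 ≤ heavyBallEnergy L γ (L xs) x v / min (α * γ) (1 / 2) := by
  have hm : 0 < min (α * γ) (1 / 2) := lt_min (by positivity) (by norm_num)
  rw [le_div_iff₀ hm, heavyBallEnergy]
  calc (‖x - xs‖ ^ 2 + ‖v‖ ^ 2) * min (α * γ) (1 / 2)
      ≤ α * γ * ‖x - xs‖ ^ 2 + (1 / 2) * ‖v‖ ^ 2 := by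
        rw [add_mul, mul_comm, mul_comm (‖v‖ ^ 2)]
        gcongr
        exacts [min_le_left _ _, min_le_right _ _]
    _ ≤ γ * (L x - L xs) + (1 / 2) * ‖v‖ ^ 2 := by
        rw [mul_comm α, mul_assoc]
        gcongr
        exact hQG x

theorem hasDerivAt_heavyBallEnergy [InnerProductSpace ℝ E] [CompleteSpace E]
    {L : E → ℝ} {g : E} {γ lam Lstar : ℝ} {z₁ z₂ : ℝ → E} {t : ℝ}
    (hL : HasGradientAt L g (z₁ t)) (hz₁ : HasDerivAt z₁ (z₂ t) t)
    (hz₂ : HasDerivAt z₂ (-(lam • z₂ t) - γ • g) t) :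
    HasDerivAt (fun s => heavyBallEnergy L γ Lstar (z₁ s) (z₂ s)) (-(lam * ‖z₂ t‖ ^ 2)) t := by
  have hpot : HasDerivAt (fun s => L (z₁ s)) ⟪g, z₂ t⟫ t :=
    hL.hasFDerivAt.comp_hasDerivAt t hz₁
  refine (((hpot.sub_const Lstar).const_mul γ).add (hz₂.norm_sq.const_mul (1 / 2))).congr_deriv ?_
  rw [inner_sub_right, inner_neg_right, real_inner_smul_right, real_inner_smul_right,
    real_inner_self_eq_norm_sq, real_inner_comm]
  ring

theorem heavyBall_bounded_general {n : ℕ}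
    (L : EuclideanSpace ℝ (Fin n) → ℝ)
    (hC1 : ContDiff ℝ 1 L)
    (zs : EuclideanSpace ℝ (Fin n))
    (α : ℝ) (hα : 0 < α)
    (hQG : ∀ z, α * ‖z - zs‖ ^ 2 ≤ L z - L zs)
    (lam γ : ℝ) (hlam : 0 < lam) (hγ : 0 < γ)
    (z₁ z₂ : ℝ → EuclideanSpace ℝ (Fin n))
    (hz₁ : ∀ t, 0 ≤ t → HasDerivAt z₁ (z₂ t) t)
    (hz₂ : ∀ t, 0 ≤ t →
      HasDerivAt z₂ (-(lam • z₂ t) - γ • gradient L (z₁ t)) t) :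
    AntitoneOn (fun t => γ * (L (z₁ t) - L zs) + (1 / 2) * ‖z₂ t‖ ^ 2)
      (Set.Ici (0 : ℝ)) ∧
    ∀ t, 0 ≤ t →
      ‖z₁ t - zs‖ ^ 2 + ‖z₂ t‖ ^ 2
        ≤ (γ * (L (z₁ 0) - L zs) + (1 / 2) * ‖z₂ 0‖ ^ 2) / min (α * γ) (1 / 2) := by
  have hanti : AntitoneOn (fun t => heavyBallEnergy L γ (L zs) (z₁ t) (z₂ t)) (Set.Ici 0) :=
    antitoneOn_Ici_of_hasDerivAt_nonpos
      (fun t ht => hasDerivAt_heavyBallEnergy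
        ((hC1.differentiable one_ne_zero (z₁ t)).hasGradientAt) (hz₁ t ht) (hz₂ t ht))
      (fun t _ => neg_nonpos.mpr (by positivity))
  refine ⟨hanti, fun t ht => ?_⟩
  calc ‖z₁ t - zs‖ ^ 2 + ‖z₂ t‖ ^ 2
      ≤ heavyBallEnergy L γ (L zs) (z₁ t) (z₂ t) / min (α * γ) (1 / 2) :=
        sq_norm_add_sq_norm_le_heavyBallEnergy_div hα hγ hQG _ _
    _ ≤ heavyBallEnergy L γ (L zs) (z₁ 0) (z₂ 0) / min (α * γ) (1 / 2) :=
        div_le_div_of_nonneg_right (hanti Set.self_mem_Ici ht ht)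
          (le_min (by positivity) (by norm_num))

/-- Boundedness of heavy ball solutions: `t ↦ V₀(z₁(t), z₂(t))` is nonincreasing
on `[0,∞)`, and `‖z₁(t) - z₁*‖² + ‖z₂(t)‖² ≤ V₀(z₁(0), z₂(0)) / min{αγ, ½}`. -/
theorem heavyBall_bounded {n : ℕ} (hn : 1 ≤ n)
    (L : EuclideanSpace ℝ (Fin n) → ℝ)
    (hC1 : ContDiff ℝ 1 L)
    (hconv : ConvexOn ℝ Set.univ L)
    (zs : EuclideanSpace ℝ (Fin n))
    (hmin : ∀ z, L zs ≤ L z)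
    (huniq : ∀ z, (∀ y, L z ≤ L y) → z = zs)
    (α : ℝ) (hα : 0 < α)
    (hQG : ∀ z, α * ‖z - zs‖ ^ 2 ≤ L z - L zs)
    (lam γ : ℝ) (hlam : 0 < lam) (hγ : 0 < γ)
    (z₁ z₂ : ℝ → EuclideanSpace ℝ (Fin n))
    (hz₁ : ∀ t, 0 ≤ t → HasDerivAt z₁ (z₂ t) t)
    (hz₂ : ∀ t, 0 ≤ t →
      HasDerivAt z₂ (-(lam • z₂ t) - γ • gradient L (z₁ t)) t) :
    AntitoneOn (fun t => γ * (L (z₁ t) - L zs) + (1 / 2) * ‖z₂ t‖ ^ 2)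
      (Set.Ici (0 : ℝ)) ∧
    ∀ t, 0 ≤ t →
      ‖z₁ t - zs‖ ^ 2 + ‖z₂ t‖ ^ 2
        ≤ (γ * (L (z₁ 0) - L zs) + (1 / 2) * ‖z₂ 0‖ ^ 2) / min (α * γ) (1 / 2) :=
  heavyBall_bounded_general L hC1 zs α hα hQG lam γ hlam hγ z₁ z₂ hz₁ hz₂
end
end

section
/- Global attractivity of the minimizer for the heavy ball method: every solution of the heavy ball system converges to the minimizer with zero velocity, i.e. lim_{t→∞} z₁(t) = z₁* and lim_{t→∞} z₂(t) = 0. -/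
/-!
The mechanical energy `e = γ (L z₁ - L*) + ‖z₂‖² / 2` of the heavy ball only satisfies
`ė = -λ ‖z₂‖²`, which says nothing about `z₁`. Adding a small cross term gives the Lyapunov
function `V = e + ε ⟪z₁ - z₁*, z₂⟫`. The cross term contributes `-ε γ ⟪∇L z₁, z₁ - z₁*⟫` to `V̇`,
and by convexity this is at most `-ε γ (L z₁ - L*)`; together with quadratic growth and Young's
inequality this gives `V̇ ≤ -(ε / 2) e`, while for small `ε` also `e / 2 ≤ V ≤ 3 e / 2`. Hence
`V̇ ≤ -(ε / 3) V`, so `V`, and with it `e`, decays exponentially, and quadratic growth bounds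
`γ α ‖z₁ - z₁*‖²` by `e`.
-/

open scoped RealInnerProductSpace

open Filter Real Set Topology

noncomputable section

section Calculus

variable {F : Type*} [NormedAddCommGroup F] [InnerProductSpace ℝ F] [CompleteSpace F]

theorem HasGradientAt.comp_hasDerivAt {L : F → ℝ} {g : F} {c : ℝ → F} {v : F} {t : ℝ}
    (hL : HasGradientAt L g (c t)) (hc : HasDerivAt c v t) :
    HasDerivAt (fun s => L (c s)) ⟪g, v⟫ t := by
  have h := hL.hasFDerivAt.comp_hasDerivAt t hc
  rwa [InnerProductSpace.toDual_apply_apply] at h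

theorem ConvexOn.add_inner_le_of_hasGradientAt {L : F → ℝ} {g x : F}
    (hconv : ConvexOn ℝ univ L) (hL : HasGradientAt L g x) (y : F) :
    L x + ⟪g, y - x⟫ ≤ L y := by
  have hline : ConvexOn ℝ univ fun s : ℝ => L (AffineMap.lineMap x y s) := by
    have h := hconv.comp_affineMap (AffineMap.lineMap x y)
    rwa [preimage_univ] at h
  have hderiv : HasDerivAt (fun s : ℝ => L (AffineMap.lineMap x y s)) ⟪g, y - x⟫ 0 := by
    refine HasGradientAt.comp_hasDerivAt (c := fun s => AffineMap.lineMap x y s) ?_ ?_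
    · simpa only [AffineMap.lineMap_apply_zero] using hL
    · exact AffineMap.hasDerivAt_lineMap
  have := hline.le_slope_of_hasDerivAt (mem_univ 0) (mem_univ 1) one_pos hderiv
  simp only [slope_def_field, AffineMap.lineMap_apply_one, AffineMap.lineMap_apply_zero,
    sub_zero, div_one] at this
  linarith

end Calculus

theorem le_mul_exp_of_hasDerivAt_le {f f' : ℝ → ℝ} {K : ℝ}
    (hf : ∀ t, 0 ≤ t → HasDerivAt f (f' t) t) (hbound : ∀ t, 0 ≤ t → f' t ≤ K * f t)
    {t : ℝ} (ht : 0 ≤ t) : f t ≤ f 0 * exp (K * t) := by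
  have := le_gronwallBound_of_liminf_deriv_right_le (f := f) (f' := f') (δ := f 0) (K := K)
    (ε := 0) (a := 0) (b := t)
    (fun s hs => (hf s hs.1).continuousAt.continuousWithinAt)
    (fun s hs _ hr => (hf s hs.1).hasDerivWithinAt.liminf_right_slope_le hr) le_rfl
    (fun s hs => by simpa only [add_zero] using hbound s hs.1) t ⟨ht, le_rfl⟩
  simpa only [sub_zero, gronwallBound_ε0] using this

namespace HeavyBall

variable {F : Type*} [NormedAddCommGroup F] (L : F → ℝ) (zs : F)

def energy (γ : ℝ) (x v : F) : ℝ := γ * (L x - L zs) + ‖v‖ ^ 2 / 2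

variable {L zs}

theorem tendsto_of_energy_le {ι : Type*} {l : Filter ι} {α γ : ℝ} {z₁ z₂ : ι → F} {u : ι → ℝ}
    (hQG : ∀ z, α * ‖z - zs‖ ^ 2 ≤ L z - L zs) (hγ : 0 ≤ γ) (hγα : 0 < γ * α)
    (h : ∀ᶠ t in l, energy L zs γ (z₁ t) (z₂ t) ≤ u t) (hu : Tendsto u l (𝓝 0)) :
    Tendsto z₁ l (𝓝 zs) ∧ Tendsto z₂ l (𝓝 0) := by
  have hbound (t : ι) :
      γ * α * ‖z₁ t - zs‖ ^ 2 + ‖z₂ t‖ ^ 2 / 2 ≤ energy L zs γ (z₁ t) (z₂ t) := by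
    rw [energy, mul_assoc]; gcongr; exact hQG _
  constructor
  · rw [tendsto_iff_norm_sub_tendsto_zero]
    refine squeeze_zero' (.of_forall fun _ => norm_nonneg _) ?_
      (by simpa only [zero_div, Real.sqrt_zero] using (hu.div_const (γ * α)).sqrt)
    filter_upwards [h] with t ht
    refine Real.le_sqrt_of_sq_le ?_
    rw [le_div_iff₀' hγα]
    linarith [hbound t, sq_nonneg ‖z₂ t‖]
  · rw [tendsto_zero_iff_norm_tendsto_zero]
    refine squeeze_zero' (.of_forall fun _ => norm_nonneg _) ?_
      (by simpa only [mul_zero, Real.sqrt_zero] using (hu.const_mul 2).sqrt)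
    filter_upwards [h] with t ht
    refine Real.le_sqrt_of_sq_le ?_
    nlinarith [hbound t, sq_nonneg ‖z₁ t - zs‖]

variable [InnerProductSpace ℝ F] (L zs)

def lyapunov (γ ε : ℝ) (x v : F) : ℝ := energy L zs γ x v + ε * ⟪x - zs, v⟫

def lyapunovDeriv (γ ε lam : ℝ) (x v g : F) : ℝ :=
  -((lam - ε) * ‖v‖ ^ 2) - ε * lam * ⟪x - zs, v⟫ - ε * γ * ⟪g, x - zs⟫

variable {L zs}

theorem hasDerivAt_lyapunov [CompleteSpace F] {γ ε lam : ℝ} {z₁ z₂ : ℝ → F} {t : ℝ}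
    (hL : DifferentiableAt ℝ L (z₁ t)) (hz₁ : HasDerivAt z₁ (z₂ t) t)
    (hz₂ : HasDerivAt z₂ (-(lam • z₂ t) - γ • gradient L (z₁ t)) t) :
    HasDerivAt (fun s => lyapunov L zs γ ε (z₁ s) (z₂ s))
      (lyapunovDeriv zs γ ε lam (z₁ t) (z₂ t) (gradient L (z₁ t))) t := by
  have hpot := ((hL.hasGradientAt.comp_hasDerivAt hz₁).sub_const (L zs)).const_mul γ
  have hkin := hz₂.norm_sq.div_const 2
  have hcross := ((hz₁.sub_const zs).inner ℝ hz₂).const_mul ε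
  refine ((hpot.add hkin).add hcross).congr_deriv ?_
  simp only [lyapunovDeriv, inner_sub_right, inner_neg_right, real_inner_smul_right,
    real_inner_self_eq_norm_sq]
  rw [real_inner_comm (gradient L (z₁ t)) (z₂ t), real_inner_comm (gradient L (z₁ t)) (z₁ t - zs),
    inner_sub_right]
  ring

theorem abs_mul_inner_le_half_energy {α γ ε : ℝ} {x v : F}
    (hQG : α * ‖x - zs‖ ^ 2 ≤ L x - L zs) (hγ : 0 ≤ γ) (hε : 0 ≤ ε)
    (hεγα : ε ≤ γ * α) (hεhalf : ε ≤ 1 / 2) :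
    |ε * ⟪x - zs, v⟫| ≤ energy L zs γ x v / 2 := by
  have hXV : |⟪x - zs, v⟫| ≤ (‖x - zs‖ ^ 2 + ‖v‖ ^ 2) / 2 :=
    (abs_real_inner_le_norm _ _).trans (by linarith [two_mul_le_add_sq ‖x - zs‖ ‖v‖])
  have hX : ε * ‖x - zs‖ ^ 2 ≤ γ * (L x - L zs) := calc
    ε * ‖x - zs‖ ^ 2 ≤ γ * α * ‖x - zs‖ ^ 2 := by gcongr
    _ ≤ γ * (L x - L zs) := by rw [mul_assoc]; gcongr
  have hV : ε * ‖v‖ ^ 2 ≤ ‖v‖ ^ 2 / 2 := by nlinarith [sq_nonneg ‖v‖]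
  rw [abs_mul, abs_of_nonneg hε, energy]
  nlinarith [mul_le_mul_of_nonneg_left hXV hε]

theorem lyapunovDeriv_le {α γ ε lam : ℝ} {x v g : F}
    (hQG : α * ‖x - zs‖ ^ 2 ≤ L x - L zs) (hg : L x - L zs ≤ ⟪g, x - zs⟫)
    (hγ : 0 ≤ γ) (hγα : 0 < γ * α) (hε : 0 ≤ ε) (hlam : 0 ≤ lam)
    (hεlam : ε * (2 * (γ * α) + lam ^ 2) ≤ lam * (γ * α)) :
    lyapunovDeriv zs γ ε lam x v g ≤ -(ε / 2) * energy L zs γ x v := by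
  set X := ‖x - zs‖
  set V := ‖v‖
  set κ := γ * α
  have hp : -⟪x - zs, v⟫ ≤ X * V := neg_le.1 (abs_le.1 (abs_real_inner_le_norm _ _)).1
  have hYoung := two_mul_le_add_sq (κ * X) (lam * V)
  have hcross : ε * lam * (X * V) ≤ ε * κ * X ^ 2 / 2 + (lam / 2 - ε) * V ^ 2 := by
    refine le_of_mul_le_mul_left ?_ hγα
    nlinarith [mul_le_mul_of_nonneg_left hYoung hε, mul_le_mul_of_nonneg_right hεlam (sq_nonneg V)]
  have hpot : κ * X ^ 2 ≤ γ * ⟪g, x - zs⟫ := by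
    rw [mul_assoc]; exact mul_le_mul_of_nonneg_left (hQG.trans hg) hγ
  have hε2 : 2 * ε ≤ lam := by nlinarith
  rw [lyapunovDeriv, energy]
  nlinarith [mul_le_mul_of_nonneg_left hp (mul_nonneg hε hlam), mul_le_mul_of_nonneg_left hpot hε,
    mul_le_mul_of_nonneg_left hg (mul_nonneg hε hγ), sq_nonneg V]

theorem energy_le_mul_exp [CompleteSpace F] {α γ ε lam : ℝ} {z₁ z₂ : ℝ → F}
    (hdiff : Differentiable ℝ L) (hconv : ConvexOn ℝ univ L)
    (hQG : ∀ z, α * ‖z - zs‖ ^ 2 ≤ L z - L zs) (hγ : 0 ≤ γ) (hγα : 0 < γ * α) (hlam : 0 ≤ lam)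
    (hε : 0 ≤ ε) (hεγα : ε ≤ γ * α) (hεhalf : ε ≤ 1 / 2)
    (hεlam : ε * (2 * (γ * α) + lam ^ 2) ≤ lam * (γ * α))
    (hz₁ : ∀ t, 0 ≤ t → HasDerivAt z₁ (z₂ t) t)
    (hz₂ : ∀ t, 0 ≤ t → HasDerivAt z₂ (-(lam • z₂ t) - γ • gradient L (z₁ t)) t)
    {t : ℝ} (ht : 0 ≤ t) :
    energy L zs γ (z₁ t) (z₂ t) ≤
      2 * lyapunov L zs γ ε (z₁ 0) (z₂ 0) * exp (-(ε / 3) * t) := by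
  have hcross (x v : F) := abs_le.1 <|
    abs_mul_inner_le_half_energy (v := v) (hQG x) hγ hε hεγα hεhalf
  have hdecay : ∀ s, 0 ≤ s → lyapunovDeriv zs γ ε lam (z₁ s) (z₂ s) (gradient L (z₁ s)) ≤
      -(ε / 3) * lyapunov L zs γ ε (z₁ s) (z₂ s) := by
    intro s _
    have hgrad : L (z₁ s) - L zs ≤ ⟪gradient L (z₁ s), z₁ s - zs⟫ := by
      have := hconv.add_inner_le_of_hasGradientAt (hdiff (z₁ s)).hasGradientAt zs
      rw [inner_sub_right] at this ⊢
      linarith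
    have hdiss := lyapunovDeriv_le (v := z₂ s) (hQG _) hgrad hγ hγα hε hlam hεlam
    rw [lyapunov]
    nlinarith [mul_le_mul_of_nonneg_left (hcross (z₁ s) (z₂ s)).2 hε]
  have hlyap := le_mul_exp_of_hasDerivAt_le
    (fun s hs => hasDerivAt_lyapunov (hdiff _) (hz₁ s hs) (hz₂ s hs)) hdecay ht
  rw [lyapunov] at hlyap
  linarith [hcross (z₁ t) (z₂ t)]

end HeavyBall

theorem heavyBall_global_attractivity_general {n : ℕ}
    (L : EuclideanSpace ℝ (Fin n) → ℝ)
    (hC1 : ContDiff ℝ 1 L)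
    (hconv : ConvexOn ℝ Set.univ L)
    (zs : EuclideanSpace ℝ (Fin n))
    (α : ℝ) (hα : 0 < α)
    (hQG : ∀ z, α * ‖z - zs‖ ^ 2 ≤ L z - L zs)
    (lam γ : ℝ) (hlam : 0 < lam) (hγ : 0 < γ)
    (z₁ z₂ : ℝ → EuclideanSpace ℝ (Fin n))
    (hz₁ : ∀ t, 0 ≤ t → HasDerivAt z₁ (z₂ t) t)
    (hz₂ : ∀ t, 0 ≤ t →
      HasDerivAt z₂ (-(lam • z₂ t) - γ • gradient L (z₁ t)) t) :
    Filter.Tendsto z₁ Filter.atTop (nhds zs) ∧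
    Filter.Tendsto z₂ Filter.atTop (nhds 0) := by
  have hγα : 0 < γ * α := mul_pos hγ hα
  set ε := min (min (γ * α) (1 / 2)) (lam * (γ * α) / (2 * (γ * α) + lam ^ 2))
  have hε : 0 < ε := by positivity
  have hεγα : ε ≤ γ * α := (min_le_left _ _).trans (min_le_left _ _)
  have hεhalf : ε ≤ 1 / 2 := (min_le_left _ _).trans (min_le_right _ _)
  have hεlam : ε * (2 * (γ * α) + lam ^ 2) ≤ lam * (γ * α) :=
    (le_div_iff₀ (by positivity)).1 (min_le_right _ _)
  have hdecay (t : ℝ) (ht : 0 ≤ t) := HeavyBall.energy_le_mul_exp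
    (hC1.differentiable one_ne_zero) hconv hQG hγ.le hγα hlam.le hε.le hεγα hεhalf hεlam hz₁ hz₂ ht
  refine HeavyBall.tendsto_of_energy_le hQG hγ.le hγα ((eventually_ge_atTop 0).mono hdecay) ?_
  have hexp : Tendsto (fun t => exp (-(ε / 3) * t)) atTop (𝓝 0) :=
    tendsto_exp_comp_nhds_zero.2 (tendsto_id.const_mul_atTop_of_neg (by linarith))
  simpa only [mul_zero] using hexp.const_mul _

/-- Global attractivity of the minimizer for the heavy ball method:
`z₁(t) → z₁*` and `z₂(t) → 0` as `t → ∞`. -/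
theorem heavyBall_global_attractivity {n : ℕ} (hn : 1 ≤ n)
    (L : EuclideanSpace ℝ (Fin n) → ℝ)
    (hC1 : ContDiff ℝ 1 L)
    (hconv : ConvexOn ℝ Set.univ L)
    (zs : EuclideanSpace ℝ (Fin n))
    (hmin : ∀ z, L zs ≤ L z)
    (huniq : ∀ z, (∀ y, L z ≤ L y) → z = zs)
    (α : ℝ) (hα : 0 < α)
    (hQG : ∀ z, α * ‖z - zs‖ ^ 2 ≤ L z - L zs)
    (M : ℝ) (hM : 0 < M)
    (hLip : ∀ w u, ‖gradient L w - gradient L u‖ ≤ M * ‖w - u‖)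
    (lam γ : ℝ) (hlam : 0 < lam) (hγ : 0 < γ)
    (z₁ z₂ : ℝ → EuclideanSpace ℝ (Fin n))
    (hz₁ : ∀ t, 0 ≤ t → HasDerivAt z₁ (z₂ t) t)
    (hz₂ : ∀ t, 0 ≤ t →
      HasDerivAt z₂ (-(lam • z₂ t) - γ • gradient L (z₁ t)) t) :
    Filter.Tendsto z₁ Filter.atTop (nhds zs) ∧
    Filter.Tendsto z₂ Filter.atTop (nhds 0) :=
  heavyBall_global_attractivity_general L hC1 hconv zs α hα hQG lam γ hlam hγ z₁ z₂ hz₁ hz₂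
end
end

section
/- Linear growth bound on the Nesterov vector field: define f((z₁, z₂), t) := (z₂, -2 d̄(t) z₂ - (ζ²/M) ∇L(z₁ + β̄(t) z₂)). Then for every (z₁, z₂) ∈ ℝ^n × ℝ^n and every t ≥ 0, ‖f((z₁, z₂), t)‖² ≤ (11/2 + 4ζ⁴)·(‖z₁ - z₁*‖² + ‖z₂‖²). -/
/-!
Since `∇L(z₁*) = 0`, the Lipschitz bound gives `‖∇L(w)‖ ≤ M ‖w - z₁*‖`, and for
`w = z₁ + β̄(t) z₂` with `|β̄(t)| ≤ 1` this is at most `M (‖z₁ - z₁*‖ + ‖z₂‖)`. As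
`2 d̄(t) ≤ 3/2`, the second component of the field then has norm at most
`(3/2) ‖z₂‖ + ζ² (‖z₁ - z₁*‖ + ‖z₂‖)`, and `(x + y)² ≤ 2x² + 2y²`, used twice, finishes.
-/

theorem IsLocalMin.gradient_eq_zero {E : Type*} [NormedAddCommGroup E] [InnerProductSpace ℝ E]
    [CompleteSpace E] {f : E → ℝ} {a : E} (h : IsLocalMin f a) : gradient f a = 0 := by
  simp [gradient, h.fderiv_eq_zero]

lemma two_mul_three_div_two_mul_add_two_le {t : ℝ} (ht : 0 ≤ t) :
    2 * (3 / (2 * (t + 2))) ≤ 3 / 2 := by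
  rw [mul_div_assoc', mul_div_mul_left _ _ two_ne_zero, div_le_div_iff₀ (by linarith) two_pos]
  linarith

lemma sq_add_sq_le_of_le_three_halves_mul_add {a b x ζ : ℝ} (hx : 0 ≤ x)
    (hxle : x ≤ 3 / 2 * b + ζ ^ 2 * (a + b)) :
    b ^ 2 + x ^ 2 ≤ (11 / 2 + 4 * ζ ^ 4) * (a ^ 2 + b ^ 2) := by
  calc b ^ 2 + x ^ 2 ≤ b ^ 2 + (3 / 2 * b + ζ ^ 2 * (a + b)) ^ 2 := by gcongr
    _ ≤ b ^ 2 + 2 * (3 / 2 * b) ^ 2 + 2 * (ζ ^ 2 * (a + b)) ^ 2 := by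
      nlinarith [sq_nonneg (3 / 2 * b - ζ ^ 2 * (a + b))]
    _ ≤ (11 / 2 + 4 * ζ ^ 4) * (a ^ 2 + b ^ 2) := by
      nlinarith [mul_nonneg (pow_two_nonneg (ζ ^ 2)) (sq_nonneg (a - b)), sq_nonneg a]

section

variable {E : Type*} [NormedAddCommGroup E] [NormedSpace ℝ E]

lemma norm_add_smul_sub_le_of_abs_le_one {z₁ z₂ zs : E} {β : ℝ} (hβ : |β| ≤ 1) :
    ‖z₁ + β • z₂ - zs‖ ≤ ‖z₁ - zs‖ + ‖z₂‖ :=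
  calc ‖z₁ + β • z₂ - zs‖ = ‖(z₁ - zs) + β • z₂‖ := by rw [add_sub_right_comm]
    _ ≤ ‖z₁ - zs‖ + |β| * ‖z₂‖ := by rw [← Real.norm_eq_abs, ← norm_smul]; exact norm_add_le _ _
    _ ≤ ‖z₁ - zs‖ + ‖z₂‖ := by gcongr; exact mul_le_of_le_one_left (norm_nonneg _) hβ

lemma norm_neg_smul_sub_smul_le {g : E → E} {zs z₁ z₂ : E} {M c β ζ : ℝ} (hM : 0 < M)
    (hg : ∀ w, ‖g w‖ ≤ M * ‖w - zs‖) (hc₀ : 0 ≤ c) (hc : c ≤ 3 / 2) (hβ : |β| ≤ 1) :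
    ‖-(c • z₂) - (ζ ^ 2 / M) • g (z₁ + β • z₂)‖ ≤ 3 / 2 * ‖z₂‖ + ζ ^ 2 * (‖z₁ - zs‖ + ‖z₂‖) :=
  calc ‖-(c • z₂) - (ζ ^ 2 / M) • g (z₁ + β • z₂)‖
      ≤ c * ‖z₂‖ + ζ ^ 2 / M * ‖g (z₁ + β • z₂)‖ := by
        refine (norm_sub_le _ _).trans_eq ?_
        rw [norm_neg, norm_smul, norm_smul, Real.norm_of_nonneg hc₀,
          Real.norm_of_nonneg (by positivity)]
    _ ≤ 3 / 2 * ‖z₂‖ + ζ ^ 2 / M * (M * (‖z₁ - zs‖ + ‖z₂‖)) := by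
        gcongr
        exact (hg _).trans (by gcongr; exact norm_add_smul_sub_le_of_abs_le_one hβ)
    _ = 3 / 2 * ‖z₂‖ + ζ ^ 2 * (‖z₁ - zs‖ + ‖z₂‖) := by field_simp

end

theorem nesterov_vector_field_growth_general {n : ℕ}
    (L : EuclideanSpace ℝ (Fin n) → ℝ)
    (zs : EuclideanSpace ℝ (Fin n))
    (hmin : ∀ z, L zs ≤ L z)
    (M : ℝ) (hM : 0 < M)
    (hLip : ∀ w u, ‖gradient L w - gradient L u‖ ≤ M * ‖w - u‖)
    (ζ : ℝ) :
    ∀ z₁ z₂ : EuclideanSpace ℝ (Fin n), ∀ t : ℝ, 0 ≤ t →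
      ‖z₂‖ ^ 2
        + ‖-((2 * (3 / (2 * (t + 2)))) • z₂)
            - (ζ ^ 2 / M) • gradient L (z₁ + ((t - 1) / (t + 2)) • z₂)‖ ^ 2
      ≤ (11 / 2 + 4 * ζ ^ 4) * (‖z₁ - zs‖ ^ 2 + ‖z₂‖ ^ 2) := by
  intro z₁ z₂ t ht
  have hgrad_zs : gradient L zs = 0 :=
    ((isMinOn_univ_iff.2 hmin).isLocalMin Filter.univ_mem).gradient_eq_zero
  have hgrad : ∀ w, ‖gradient L w‖ ≤ M * ‖w - zs‖ := fun w => by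
    simpa [hgrad_zs] using hLip w zs
  have hmomentum : |(t - 1) / (t + 2)| ≤ 1 := by
    rw [abs_le, le_div_iff₀ (by linarith), div_le_iff₀ (by linarith)]
    constructor <;> linarith
  exact sq_add_sq_le_of_le_three_halves_mul_add (norm_nonneg _) <|
    norm_neg_smul_sub_smul_le hM hgrad (by positivity)
      (two_mul_three_div_two_mul_add_two_le ht) hmomentum

/-- Linear growth bound on the Nesterov vector field
`f((z₁,z₂),t) = (z₂, -2d̄(t)z₂ - (ζ²/M)∇L(z₁ + β̄(t)z₂))`:
`‖f((z₁,z₂),t)‖² ≤ (11/2 + 4ζ⁴)(‖z₁ - z₁*‖² + ‖z₂‖²)` for all `t ≥ 0`. -/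
theorem nesterov_vector_field_growth {n : ℕ} (hn : 1 ≤ n)
    (L : EuclideanSpace ℝ (Fin n) → ℝ)
    (hC1 : ContDiff ℝ 1 L)
    (hconv : ConvexOn ℝ Set.univ L)
    (zs : EuclideanSpace ℝ (Fin n))
    (hmin : ∀ z, L zs ≤ L z)
    (huniq : ∀ z, (∀ y, L z ≤ L y) → z = zs)
    (M : ℝ) (hM : 0 < M)
    (hLip : ∀ w u, ‖gradient L w - gradient L u‖ ≤ M * ‖w - u‖)
    (ζ : ℝ) (hζ : 0 < ζ) :
    ∀ z₁ z₂ : EuclideanSpace ℝ (Fin n), ∀ t : ℝ, 0 ≤ t →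
      ‖z₂‖ ^ 2
        + ‖-((2 * (3 / (2 * (t + 2)))) • z₂)
            - (ζ ^ 2 / M) • gradient L (z₁ + ((t - 1) / (t + 2)) • z₂)‖ ^ 2
      ≤ (11 / 2 + 4 * ζ ^ 4) * (‖z₁ - zs‖ ^ 2 + ‖z₂‖ ^ 2) :=
  nesterov_vector_field_growth_general L zs hmin M hM hLip ζ
end
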